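/- For every β ∈ k with β ≠ 0 and every α ∈ k, and every n ∈ ℕ, the degree-n component of the down-up algebra D(α,β) (the k-span of the images of all words of length n in u and d) has k-dimension equal to the number of triples (i,j,l) ∈ ℕ³ with i + 2j + l = n; equivalently, the Hilbert series of D(α,β) is 1/((1−t)²(1−t²)). -/

import Mathlib

/-!
Spanning: the two defining relations rewrite the factors `u u d` and `u d d` as combinations of
permuted words with fewer pairs "`u` before `d`", so by induction on that number every word of
length `n` lies in the span of the words avoiding both factors, which are the
`d^a (u d)^j u^b` with `a + 2j + b = n`.

Independence: `D(α,β)` acts on `R[t, t⁻¹]`, `R = k[x, y]`, by `u ↦ t σ` and `d ↦ t⁻¹ y σ⁻¹`,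
where `σ` is the automorphism `x ↦ α x + β y`, `y ↦ x` (invertible because `β ≠ 0`); the
relations amount to `σ² y = α σ y + β y`. The monomial `d^a (u d)^j u^b` sends `1` to
`t^(b-a) δ^a (x^j)` with `δ = y σ⁻¹`. Fixing `b - a` fixes `p = a + j`, and the elements
`δ^(p-j) (x^j)`, `j ≤ p`, are independent by induction on `p`: all but the last are the images
under the injective map `δ` of the family for `p - 1`, and they lie in `y R`, which does not
contain the last one, `x^p`.
-/

open FreeAlgebra

noncomputable section

/-- The defining relations of the down-up algebra `D(a,b)` (with `u = ι k 0`, `d = ι k 1`). -/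
inductive DownUpRel (k : Type*) [CommRing k] (a b : k) :
    FreeAlgebra k (Fin 2) → FreeAlgebra k (Fin 2) → Prop
  | rel1 : DownUpRel k a b (ι k 0 * ι k 0 * ι k 1)
      (a • (ι k 0 * ι k 1 * ι k 0) + b • (ι k 1 * ι k 0 * ι k 0))
  | rel2 : DownUpRel k a b (ι k 0 * ι k 1 * ι k 1)
      (a • (ι k 1 * ι k 0 * ι k 1) + b • (ι k 1 * ι k 1 * ι k 0))

/-- The down-up algebra `D(a,b)`. -/
abbrev DownUp (k : Type*) [CommRing k] (a b : k) : Type _ :=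
  RingQuot (DownUpRel k a b)

/-- The image in `D(a,b)` of a word in the free monoid on the generators `u, d`. -/
def DownUp.wordVal (k : Type*) [CommRing k] (a b : k) :
    FreeMonoid (Fin 2) →* DownUp k a b :=
  FreeMonoid.lift fun i => RingQuot.mkAlgHom k (DownUpRel k a b) (ι k i)

/-- The degree-`n` component of the down-up algebra: the `k`-span of the images of
all words of length `n` in `u` and `d`. -/
def DownUp.degComp (k : Type*) [CommRing k] (a b : k) (n : ℕ) :
    Submodule k (DownUp k a b) :=
  Submodule.span k {z | ∃ w : FreeMonoid (Fin 2), w.length = n ∧ DownUp.wordVal k a b w = z}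

section LinearAlgebra

variable {K V W : Type*} [DivisionRing K] [AddCommGroup V] [Module K V] [AddCommGroup W]
  [Module K W]

theorem linearIndependent_iterate_sub_apply {δ : V →ₗ[K] V} (hδ : Function.Injective δ)
    {ψ : V →ₗ[K] W} (hψδ : ψ ∘ₗ δ = 0) {z : ℕ → V} (hz : ∀ n, ψ (z n) ≠ 0) (p : ℕ) :
    LinearIndependent K fun j : Fin (p + 1) => δ^[p - j] (z j) := by
  induction p with
  | zero => simpa [linearIndependent_unique_iff] using fun h => hz 0 (by rw [h, map_zero])
  | succ p ih =>
    have hsnoc : (fun j : Fin (p + 2) => δ^[p + 1 - j] (z j)) =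
        Fin.snoc (fun j : Fin (p + 1) => δ (δ^[p - j] (z j))) (z (p + 1)) := by
      funext j
      refine Fin.lastCases ?_ (fun j => ?_) j
      · simp
      · rw [Fin.snoc_castSucc, ← Function.iterate_succ_apply' δ, Fin.val_castSucc]
        congr 2
        omega
    rw [hsnoc, linearIndependent_finSnoc]
    refine ⟨ih.map' δ (LinearMap.ker_eq_bot.2 hδ), fun hmem => hz (p + 1) ?_⟩
    have hker : Submodule.span K (Set.range fun j : Fin (p + 1) => δ (δ^[p - j] (z j))) ≤
        LinearMap.ker ψ :=
      Submodule.span_le.2 <| Set.range_subset_iff.2 fun j => by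
        simp [← LinearMap.comp_apply, hψδ]
    exact hker hmem

end LinearAlgebra

theorem Finsupp.linearIndependent_single_of_fibers {R M ι Γ : Type*} [Semiring R]
    [AddCommMonoid M] [Module R M] (a : ι → Γ) (v : ι → M)
    (h : ∀ i₀, LinearIndependent R fun i : {i // a i = a i₀} => v i) :
    LinearIndependent R fun i => Finsupp.single (a i) (v i) := by
  have hfib (c : Γ) : LinearIndependent R fun i : {i // a i = c} => v i := by
    rcases isEmpty_or_nonempty {i // a i = c} with hc | ⟨⟨i₀, rfl⟩⟩
    · exact linearIndependent_empty_type
    · exact h i₀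
  have hsigma := (Finsupp.linearIndependent_single (fun c (i : {i // a i = c}) => v i) hfib).comp _
    (Equiv.sigmaFiberEquiv a).symm.injective
  exact hsigma

namespace DownUp

section Generators

variable {k : Type*} [CommRing k] {α β : k}

def u : DownUp k α β := RingQuot.mkAlgHom k (DownUpRel k α β) (ι k 0)

def d : DownUp k α β := RingQuot.mkAlgHom k (DownUpRel k α β) (ι k 1)

theorem u_mul_u_mul_d : (u * u * d : DownUp k α β) = α • (u * d * u) + β • (d * u * u) := by
  simpa [u, d] using RingQuot.mkAlgHom_rel k (DownUpRel.rel1 (k := k) (a := α) (b := β))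

theorem u_mul_d_mul_d : (u * d * d : DownUp k α β) = α • (d * u * d) + β • (d * d * u) := by
  simpa [u, d] using RingQuot.mkAlgHom_rel k (DownUpRel.rel2 (k := k) (a := α) (b := β))

@[simp]
theorem wordVal_of_zero : wordVal k α β (.of 0) = u :=
  FreeMonoid.lift_eval_of _ _

@[simp]
theorem wordVal_of_one : wordVal k α β (.of 1) = d :=
  FreeMonoid.lift_eval_of _ _

variable {A : Type*} [Ring A] [Algebra k A]

def lift (a b : A) (h₁ : a * a * b = α • (a * b * a) + β • (b * a * a))
    (h₂ : a * b * b = α • (b * a * b) + β • (b * b * a)) : DownUp k α β →ₐ[k] A :=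
  RingQuot.liftAlgHom k ⟨FreeAlgebra.lift k ![a, b], fun _ _ h => by cases h <;> simpa⟩

variable (a b : A) (h₁ : a * a * b = α • (a * b * a) + β • (b * a * a))
  (h₂ : a * b * b = α • (b * a * b) + β • (b * b * a))

@[simp]
theorem lift_u : lift a b h₁ h₂ u = a := by
  simp [lift, u, RingQuot.liftAlgHom_mkAlgHom_apply]

@[simp]
theorem lift_d : lift a b h₁ h₂ d = b := by
  simp [lift, d, RingQuot.liftAlgHom_mkAlgHom_apply]

end Generators

section Spanning

variable {k : Type*} [CommRing k] {α β : k}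

def triples (n : ℕ) : Set (ℕ × ℕ × ℕ) := {t | t.1 + 2 * t.2.1 + t.2.2 = n}

theorem triples_finite (n : ℕ) : (triples n).Finite :=
  (Set.finite_Iic (n, n, n)).subset fun t ht => by
    simp only [triples, Set.mem_ofPred_eq] at ht
    exact ⟨(by omega : t.1 ≤ n), (by omega : t.2.1 ≤ n), (by omega : t.2.2 ≤ n)⟩

def normalMonomial (t : ℕ × ℕ × ℕ) : DownUp k α β := d ^ t.1 * (u * d) ^ t.2.1 * u ^ t.2.2

variable (k α β) in
def normalSpan (n : ℕ) : Submodule k (DownUp k α β) :=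
  Submodule.span k (normalMonomial '' triples n)

def normalWord (t : ℕ × ℕ × ℕ) : List (Fin 2) :=
  List.replicate t.1 1 ++ (List.replicate t.2.1 [0, 1]).flatten ++ List.replicate t.2.2 0

theorem length_normalWord (t : ℕ × ℕ × ℕ) :
    (normalWord t).length = t.1 + 2 * t.2.1 + t.2.2 := by
  simp [normalWord]
  ring

theorem wordVal_normalWord (t : ℕ × ℕ × ℕ) :
    wordVal k α β (.ofList (normalWord t)) = normalMonomial t := by
  simp [normalWord, normalMonomial, wordVal, FreeMonoid.lift_ofList, u, d, mul_assoc]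

def inversions : List (Fin 2) → ℕ
  | [] => 0
  | x :: w => (if x = 0 then w.count 1 else 0) + inversions w

theorem inversions_append (s t : List (Fin 2)) :
    inversions (s ++ t) = inversions s + inversions t + s.count 0 * t.count 1 := by
  induction s with
  | nil => simp [inversions]
  | cons x s ih =>
    fin_cases x
    · simp [inversions, ih]
      ring
    · simp [inversions, ih]

theorem inversions_append_append_lt {m m' : List (Fin 2)} (hp : m'.Perm m)
    (hlt : inversions m' < inversions m) (s t : List (Fin 2)) :
    inversions (s ++ m' ++ t) < inversions (s ++ m ++ t) := by
  simp only [inversions_append, List.count_append, hp.count_eq]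
  omega

theorem eq_normalWord_or_infix (w : List (Fin 2)) :
    (∃ t, w = normalWord t) ∨ [0, 0, 1] <:+: w ∨ [0, 1, 1] <:+: w := by
  induction w with
  | nil => exact .inl ⟨(0, 0, 0), rfl⟩
  | cons x w ih =>
    rcases ih with ⟨⟨a, j, b⟩, rfl⟩ | h | h
    · fin_cases x
      · match a, j with
        | 0, 0 => exact .inl ⟨(0, 0, b + 1), rfl⟩
        | 0, j + 1 => exact .inr (.inl ⟨[], _, rfl⟩)
        | 1, j => exact .inl ⟨(0, j + 1, b), rfl⟩
        | a + 2, j => exact .inr (.inr ⟨[], _, rfl⟩)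
      · exact .inl ⟨(a + 1, j, b), rfl⟩
    · exact .inr (.inl (h.trans (List.suffix_cons x w).isInfix))
    · exact .inr (.inr (h.trans (List.suffix_cons x w).isInfix))

theorem wordVal_append_append_of_eq {m m₁ m₂ : List (Fin 2)} {c₁ c₂ : k}
    (h : wordVal k α β (.ofList m) =
      c₁ • wordVal k α β (.ofList m₁) + c₂ • wordVal k α β (.ofList m₂))
    (s t : List (Fin 2)) :
    wordVal k α β (.ofList (s ++ m ++ t)) =
      c₁ • wordVal k α β (.ofList (s ++ m₁ ++ t)) +
        c₂ • wordVal k α β (.ofList (s ++ m₂ ++ t)) := by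
  simp only [FreeMonoid.ofList_append, map_mul, h, mul_add, add_mul, mul_smul_comm,
    smul_mul_assoc]

theorem wordVal_mem_normalSpan (w : List (Fin 2)) :
    wordVal k α β (.ofList w) ∈ normalSpan k α β w.length := by
  induction hN : inversions w using Nat.strong_induction_on generalizing w with
  | _ N ih =>
  subst hN
  have reduce {m m₁ m₂ : List (Fin 2)}
      (hrel : wordVal k α β (.ofList m) =
        α • wordVal k α β (.ofList m₁) + β • wordVal k α β (.ofList m₂))
      (hp₁ : m₁.Perm m) (hp₂ : m₂.Perm m) (hi₁ : inversions m₁ < inversions m)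
      (hi₂ : inversions m₂ < inversions m) (hm : m <:+: w) :
      wordVal k α β (.ofList w) ∈ normalSpan k α β w.length := by
    obtain ⟨s, t, rfl⟩ := hm
    have hmem {m'} (hp : m'.Perm m) (hi : inversions m' < inversions m) :
        wordVal k α β (.ofList (s ++ m' ++ t)) ∈ normalSpan k α β (s ++ m ++ t).length := by
      simpa [hp.length_eq] using ih _ (inversions_append_append_lt hp hi s t) _ rfl
    rw [wordVal_append_append_of_eq hrel]
    exact add_mem (Submodule.smul_mem _ _ (hmem hp₁ hi₁)) (Submodule.smul_mem _ _ (hmem hp₂ hi₂))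
  rcases eq_normalWord_or_infix w with ⟨t, rfl⟩ | h | h
  · rw [wordVal_normalWord, length_normalWord]
    exact Submodule.subset_span ⟨t, rfl, rfl⟩
  · refine reduce (m₁ := [0, 1, 0]) (m₂ := [1, 0, 0]) ?_
      (by decide) (by decide) (by decide) (by decide) h
    simpa [mul_assoc] using u_mul_u_mul_d
  · refine reduce (m₁ := [1, 0, 1]) (m₂ := [1, 1, 0]) ?_
      (by decide) (by decide) (by decide) (by decide) h
    simpa [mul_assoc] using u_mul_d_mul_d

theorem degComp_eq_normalSpan (n : ℕ) : degComp k α β n = normalSpan k α β n := by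
  apply le_antisymm
  · refine Submodule.span_le.2 ?_
    rintro _ ⟨w, rfl, rfl⟩
    have hw := wordVal_mem_normalSpan (α := α) (β := β) w.toList
    rwa [FreeMonoid.ofList_toList] at hw
  · refine Submodule.span_le.2 ?_
    rintro _ ⟨t, rfl, rfl⟩
    exact Submodule.subset_span ⟨.ofList (normalWord t), length_normalWord t, wordVal_normalWord t⟩

end Spanning

section LaurentRep

open Finsupp

variable {k R : Type*} [CommRing k] [CommRing R] [Algebra k R] {α β : k} (σ : R ≃ₐ[k] R) (y : R)

def raiseOp : (ℤ →₀ R) →ₗ[k] ℤ →₀ R :=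
  lsum k fun n => (lsingle (n + 1)).comp σ.toLinearMap

def lowerCoeff : R →ₗ[k] R :=
  LinearMap.mulLeft k y ∘ₗ σ.symm.toLinearMap

def lowerOp : (ℤ →₀ R) →ₗ[k] ℤ →₀ R :=
  lsum k fun n => (lsingle (n - 1)).comp (lowerCoeff σ y)

@[simp]
theorem lowerCoeff_apply (f : R) : lowerCoeff σ y f = y * σ.symm f :=
  rfl

@[simp]
theorem raiseOp_single (n : ℤ) (f : R) : raiseOp σ (single n f) = single (n + 1) (σ f) := by
  simp [raiseOp]

@[simp]
theorem lowerOp_single (n : ℤ) (f : R) :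
    lowerOp σ y (single n f) = single (n - 1) (y * σ.symm f) := by
  simp [lowerOp]

variable {σ y}

theorem raiseOp_mul_raiseOp_mul_lowerOp (hσ : σ (σ y) = α • σ y + β • y) :
    raiseOp σ * raiseOp σ * lowerOp σ y =
      α • (raiseOp σ * lowerOp σ y * raiseOp σ) + β • (lowerOp σ y * raiseOp σ * raiseOp σ) := by
  refine lhom_ext fun n f => ?_
  simp only [Module.End.mul_apply, LinearMap.add_apply, LinearMap.smul_apply, raiseOp_single,
    lowerOp_single, map_mul, AlgEquiv.apply_symm_apply, AlgEquiv.symm_apply_apply, smul_single,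
    hσ, sub_add_cancel, add_sub_cancel_right, ← single_add]
  congr 1
  simp only [Algebra.smul_def]
  ring

theorem raiseOp_mul_lowerOp_mul_lowerOp (hσ : σ (σ y) = α • σ y + β • y) :
    raiseOp σ * lowerOp σ y * lowerOp σ y =
      α • (lowerOp σ y * raiseOp σ * lowerOp σ y) +
        β • (lowerOp σ y * lowerOp σ y * raiseOp σ) := by
  have hσ' : σ y = α • y + β • σ.symm y := by
    simpa using congrArg σ.symm hσ
  refine lhom_ext fun n f => ?_
  simp only [Module.End.mul_apply, LinearMap.add_apply, LinearMap.smul_apply, raiseOp_single,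
    lowerOp_single, map_mul, AlgEquiv.apply_symm_apply, AlgEquiv.symm_apply_apply, smul_single,
    sub_add_cancel, add_sub_cancel_right, ← single_add]
  congr 1
  rw [hσ']
  simp only [Algebra.smul_def]
  ring

variable (σ y) in
def laurentRep (hσ : σ (σ y) = α • σ y + β • y) : DownUp k α β →ₐ[k] Module.End k (ℤ →₀ R) :=
  lift (raiseOp σ) (lowerOp σ y) (raiseOp_mul_raiseOp_mul_lowerOp hσ)
    (raiseOp_mul_lowerOp_mul_lowerOp hσ)

theorem raiseOp_pow_single_one (m : ℤ) (n : ℕ) :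
    (raiseOp σ ^ n) (single m 1) = single (m + n) 1 := by
  induction n with
  | zero => simp
  | succ n ih =>
    rw [pow_succ', Module.End.mul_apply, ih, raiseOp_single, map_one, Nat.cast_succ, add_assoc]

theorem raiseOp_mul_lowerOp_pow_single (m : ℤ) (f : R) (n : ℕ) :
    ((raiseOp σ * lowerOp σ y) ^ n) (single m f) = single m (σ y ^ n * f) := by
  induction n with
  | zero => simp
  | succ n ih =>
    rw [pow_succ', Module.End.mul_apply, ih, Module.End.mul_apply, lowerOp_single, raiseOp_single,
      map_mul, AlgEquiv.apply_symm_apply, sub_add_cancel, pow_succ', mul_assoc]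

theorem lowerOp_pow_single (m : ℤ) (f : R) (n : ℕ) :
    (lowerOp σ y ^ n) (single m f) = single (m - n) ((lowerCoeff σ y)^[n] f) := by
  induction n with
  | zero => simp
  | succ n ih =>
    rw [pow_succ', Module.End.mul_apply, ih, lowerOp_single, Function.iterate_succ_apply',
      lowerCoeff_apply, Nat.cast_succ, sub_add_eq_sub_sub]

theorem laurentRep_normalMonomial (hσ : σ (σ y) = α • σ y + β • y) (t : ℕ × ℕ × ℕ) :
    laurentRep σ y hσ (normalMonomial t) (single 0 1) =
      single ((t.2.2 : ℤ) - t.1) ((lowerCoeff σ y)^[t.1] (σ y ^ t.2.1)) := by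
  simp [laurentRep, normalMonomial, raiseOp_pow_single_one, raiseOp_mul_lowerOp_pow_single,
    lowerOp_pow_single]

end LaurentRep

section Independence

variable {k : Type*} [Field k] {α β : k}

theorem linearIndependent_iterate_fiber {V W : Type*} [AddCommGroup V] [Module k V]
    [AddCommGroup W] [Module k W] {δ : V →ₗ[k] V} (hδ : Function.Injective δ)
    {ψ : V →ₗ[k] W} (hψδ : ψ ∘ₗ δ = 0) {z : ℕ → V} (hz : ∀ n, ψ (z n) ≠ 0) {n : ℕ}
    (t₀ : triples n) :
    LinearIndependent k fun t : {t : triples n // (t.1.2.2 : ℤ) - t.1.1 = t₀.1.2.2 - t₀.1.1} =>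
      δ^[t.1.1.1] (z t.1.1.2.1) := by
  obtain ⟨⟨a₀, j₀, b₀⟩, h₀⟩ := t₀
  have hfib (t : {t : triples n // (t.1.2.2 : ℤ) - t.1.1 = b₀ - a₀}) :
      t.1.1.1 = a₀ + j₀ - t.1.1.2.1 ∧ t.1.1.2.1 < a₀ + j₀ + 1 := by
    obtain ⟨⟨⟨a, j, b⟩, h⟩, hab⟩ := t
    simp only [triples, Set.mem_ofPred_eq] at h h₀ hab ⊢
    omega
  have hinj : Function.Injective fun t : {t : triples n // (t.1.2.2 : ℤ) - t.1.1 = b₀ - a₀} =>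
      (⟨t.1.1.2.1, (hfib t).2⟩ : Fin (a₀ + j₀ + 1)) := by
    rintro ⟨⟨⟨a, j, b⟩, h⟩, hab⟩ ⟨⟨⟨a', j', b'⟩, h'⟩, hab'⟩ hjj
    simp only [triples, Set.mem_ofPred_eq, Fin.mk.injEq] at h h' hab hab' hjj
    obtain ⟨rfl, rfl, rfl⟩ : a = a' ∧ j = j' ∧ b = b' := by omega
    rfl
  convert (linearIndependent_iterate_sub_apply hδ hψδ hz (a₀ + j₀)).comp _ hinj using 2 with t
  simp [(hfib t).1]

theorem linearIndependent_normalMonomial {R S : Type*} [CommRing R] [IsDomain R] [Algebra k R]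
    [CommRing S] [IsDomain S] [Algebra k S] (σ : R ≃ₐ[k] R) {y : R}
    (hσ : σ (σ y) = α • σ y + β • y) (hy : y ≠ 0) (ψ : R →ₐ[k] S) (hψy : ψ y = 0)
    (hψσy : ψ (σ y) ≠ 0) (n : ℕ) :
    LinearIndependent k fun t : triples n => (normalMonomial t : DownUp k α β) := by
  have hδ : Function.Injective (lowerCoeff σ y) :=
    (mul_right_injective₀ hy).comp σ.symm.injective
  have hψδ : ψ.toLinearMap ∘ₗ lowerCoeff σ y = 0 := by
    ext f
    simp [hψy]
  have hz (m : ℕ) : ψ (σ y ^ m) ≠ 0 := by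
    rw [map_pow]
    exact pow_ne_zero m hψσy
  let ev := LinearMap.applyₗ (Finsupp.single 0 1) ∘ₗ (laurentRep σ y hσ).toLinearMap
  have hev : ev ∘ (fun t : triples n => (normalMonomial t : DownUp k α β)) =
      fun t => Finsupp.single ((t.1.2.2 : ℤ) - t.1.1) ((lowerCoeff σ y)^[t.1.1] (σ y ^ t.1.2.1)) :=
    funext fun t => laurentRep_normalMonomial hσ t
  refine LinearIndependent.of_comp ev ?_
  rw [hev]
  exact Finsupp.linearIndependent_single_of_fibers _ _ fun t₀ =>
    linearIndependent_iterate_fiber hδ hψδ hz t₀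

open MvPolynomial

def substEquiv (α β : k) (hβ : β ≠ 0) : MvPolynomial (Fin 2) k ≃ₐ[k] MvPolynomial (Fin 2) k :=
  AlgEquiv.ofAlgHom (aeval ![α • X 0 + β • X 1, X 0]) (aeval ![X 1, β⁻¹ • (X 0 - α • X 1)])
    (algHom_ext fun i => by fin_cases i <;> simp [smul_sub, smul_smul, hβ])
    (algHom_ext fun i => by fin_cases i <;> simp [smul_sub, smul_smul, hβ])

theorem linearIndependent_normalMonomial_of_ne_zero (hβ : β ≠ 0) (n : ℕ) :
    LinearIndependent k fun t : triples n => (normalMonomial t : DownUp k α β) :=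
  linearIndependent_normalMonomial (substEquiv α β hβ) (y := X 1) (by simp [substEquiv])
    (X_ne_zero 1) (aeval ![X 0, 0] : MvPolynomial (Fin 2) k →ₐ[k] MvPolynomial (Fin 2) k)
    (by simp) (by simp [substEquiv, X_ne_zero]) n

end Independence

end DownUp

theorem downUp_hilbertSeries (k : Type*) [Field k]
    (α β : k) (hβ : β ≠ 0) (n : ℕ) :
    Module.finrank k (DownUp.degComp k α β n) =
      Set.ncard {t : ℕ × ℕ × ℕ | t.1 + 2 * t.2.1 + t.2.2 = n} := by
  have := (DownUp.triples_finite n).fintype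
  rw [DownUp.degComp_eq_normalSpan, DownUp.normalSpan, Set.image_eq_range,
    finrank_span_eq_card (DownUp.linearIndependent_normalMonomial_of_ne_zero hβ n),
    ← Nat.card_eq_fintype_card, Nat.card_coe_set_eq]
  rfl

end
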